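/- Let μ ≤ Q be real numbers and let P, R : ℝ → ℝ be continuous on [μ, Q]. Fix q with μ < q. Define a sequence of functions S_n : ℝ → ℝ recursively by S_0(k) = P(q) · exp(−∫_q^k R(t) dt) if q ≤ k and S_0(k) = 0 otherwise, and S_{n+1}(Q') = ∫_μ^{Q'} S_n(k) · (R(k) − P(k)) · exp(−∫_k^{Q'} R(t) dt) dk. Then for every n and every Q' ∈ [q, Q], S_n(Q') = P(q) · exp(−∫_q^{Q'} R(t) dt) · (1/n!) · (∫_q^{Q'} (R(t) − P(t)) dt)^n. -/

import Mathlib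

open intervalIntegral Real

/-! `S n` vanishes below `q`, so every step of the recursion only integrates over `[q, Q']`.
There the Sudakov factors telescope, `Δ_R(q|k) Δ_R(k|Q') = Δ_R(q|Q')`, and with
`G k = ∫_q^k (R - P)` what remains to integrate is `G^n G' / n!`, whose integral over `[q, Q']`
is `G(Q')^(n+1) / (n+1)!`. -/

open Set MeasureTheory

theorem intervalIntegral.integral_eq_of_eqOn_Ioo_zero {E : Type*} [NormedAddCommGroup E]
    [NormedSpace ℝ E] {f : ℝ → E} {a b c : ℝ} (hab : a ≤ b) (hf : EqOn f 0 (Ioo a b))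
    (hbc : IntervalIntegrable f volume b c) :
    ∫ x in a..c, f x = ∫ x in b..c, f x := by
  rw [← uIoo_of_le hab] at hf
  have hab_int : IntervalIntegrable f volume a b :=
    (intervalIntegrable_congr_uIoo hf).2 intervalIntegrable_const
  rw [← integral_add_adjacent_intervals hab_int hbc, integral_congr_uIoo hf]
  simp

theorem intervalIntegral.integral_primitive_pow_mul {F : ℝ → ℝ} {a b : ℝ}
    (hF : ContinuousOn F (uIcc a b)) (n : ℕ) :
    ∫ x in a..b, (∫ t in a..x, F t) ^ n * F x = (∫ t in a..b, F t) ^ (n + 1) / (n + 1) := by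
  have hG_cont : ContinuousOn (fun x => ∫ t in a..x, F t) (uIcc a b) :=
    continuousOn_primitive_interval (hF.integrableOn_compact isCompact_uIcc)
  have hG_deriv : ∀ x ∈ Ioo (min a b) (max a b),
      HasDerivWithinAt (fun x => ∫ t in a..x, F t) (F x) (Ioi x) x := fun x hx =>
    (integral_hasDerivAt_right
      ((hF.mono (uIcc_subset_uIcc_left (Ioo_subset_Icc_self hx))).intervalIntegrable)
      ((hF.mono Ioo_subset_Icc_self).stronglyMeasurableAtFilter isOpen_Ioo x hx)
      (hF.continuousAt (Icc_mem_nhds hx.1 hx.2))).hasDerivWithinAt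
  simpa [integral_pow] using
    integral_comp_mul_deriv'' hG_cont hG_deriv hF (continuous_pow n).continuousOn

theorem exp_neg_integral_mul_exp_neg_integral {R : ℝ → ℝ} {a b c : ℝ}
    (hab : IntervalIntegrable R volume a b) (hbc : IntervalIntegrable R volume b c) :
    exp (-∫ t in a..b, R t) * exp (-∫ t in b..c, R t) = exp (-∫ t in a..c, R t) := by
  rw [← exp_add, ← neg_add, integral_add_adjacent_intervals hab hbc]

section VetoRecursion

variable {μ q : ℝ} {P R : ℝ → ℝ}

theorem veto_density_eq_zero_of_lt {S : ℕ → ℝ → ℝ} (hμq : μ ≤ q) (hS0 : ∀ k < q, S 0 k = 0)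
    (hSsucc : ∀ n Q', S (n + 1) Q' =
      ∫ k in μ..Q', S n k * (R k - P k) * exp (-∫ t in k..Q', R t))
    (n : ℕ) {k : ℝ} (hk : k < q) : S n k = 0 := by
  induction n generalizing k with
  | zero => exact hS0 k hk
  | succ n ih =>
    rw [hSsucc, integral_congr_uIoo (g := 0) fun x hx => by
      simp [ih (hx.2.trans_le (max_le hμq hk.le))]]
    simp

theorem veto_step_eq {f : ℝ → ℝ} {Q' C : ℝ} (n : ℕ) (hμq : μ ≤ q) (hqQ' : q ≤ Q')
    (hP : ContinuousOn P (Icc q Q')) (hR : ContinuousOn R (Icc q Q'))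
    (hf_lt : ∀ k < q, f k = 0)
    (hf : ∀ k ∈ Icc q Q', f k = C * exp (-∫ t in q..k, R t) * (1 / n.factorial : ℝ) *
      (∫ t in q..k, (R t - P t)) ^ n) :
    ∫ k in μ..Q', f k * (R k - P k) * exp (-∫ t in k..Q', R t) =
      C * exp (-∫ t in q..Q', R t) * (1 / (n + 1).factorial : ℝ) *
        (∫ t in q..Q', (R t - P t)) ^ (n + 1) := by
  rw [← uIcc_of_le hqQ'] at hP hR hf
  have hRP : ContinuousOn (fun t => R t - P t) (uIcc q Q') := hR.sub hP
  have hR_int : ∀ {a b}, a ∈ uIcc q Q' → b ∈ uIcc q Q' → IntervalIntegrable R volume a b :=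
    fun ha hb => (hR.mono (uIcc_subset_uIcc ha hb)).intervalIntegrable
  set c := C * exp (-∫ t in q..Q', R t) * (1 / n.factorial : ℝ)
  have h_eqOn : EqOn (fun k => f k * (R k - P k) * exp (-∫ t in k..Q', R t))
      (fun k => c * ((∫ t in q..k, (R t - P t)) ^ n * (R k - P k))) (uIcc q Q') := by
    intro k hk
    simp only [hf k hk, c, ← exp_neg_integral_mul_exp_neg_integral
      (hR_int left_mem_uIcc hk) (hR_int hk right_mem_uIcc)]
    ring
  have h_int : IntervalIntegrable (fun k => f k * (R k - P k) * exp (-∫ t in k..Q', R t))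
      volume q Q' :=
    (((continuousOn_primitive_interval (hRP.integrableOn_compact isCompact_uIcc)).pow n).mul
      hRP |>.const_smul c |>.congr h_eqOn).intervalIntegrable
  rw [integral_eq_of_eqOn_Ioo_zero hμq (fun k hk => by simp [hf_lt k hk.2]) h_int,
    integral_congr h_eqOn, intervalIntegral.integral_const_mul, integral_primitive_pow_mul hRP,
    Nat.factorial_succ]
  simp only [c]
  push_cast
  field_simp

end VetoRecursion

theorem veto_algorithm_emission_density_general (μ Q : ℝ) (P R : ℝ → ℝ)
    (hP : ContinuousOn P (Set.Icc μ Q)) (hR : ContinuousOn R (Set.Icc μ Q))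
    (q : ℝ) (hq : μ < q)
    (S : ℕ → ℝ → ℝ)
    (hS0 : ∀ k, S 0 k = if q ≤ k then P q * Real.exp (-∫ t in q..k, R t) else 0)
    (hSsucc : ∀ n Q', S (n + 1) Q' =
      ∫ k in μ..Q', S n k * (R k - P k) * Real.exp (-∫ t in k..Q', R t)) :
    ∀ n : ℕ, ∀ Q' ∈ Set.Icc q Q,
      S n Q' = P q * Real.exp (-∫ t in q..Q', R t) * (1 / (Nat.factorial n) : ℝ) *
        (∫ t in q..Q', (R t - P t)) ^ n := by
  have hS0_lt : ∀ k < q, S 0 k = 0 := fun k hk => by simp [hS0, hk.not_ge]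
  intro n
  induction n with
  | zero => intro Q' hQ'; simp [hS0, hQ'.1]
  | succ n ih =>
    intro Q' ⟨hqQ', hQ'Q⟩
    have hsub : Icc q Q' ⊆ Icc μ Q := Icc_subset_Icc hq.le hQ'Q
    rw [hSsucc]
    exact veto_step_eq n hq.le hqQ' (hP.mono hsub) (hR.mono hsub)
      (fun k hk => veto_density_eq_zero_of_lt hq.le hS0_lt hSsucc n hk)
      fun k hk => ih k ⟨hk.1, hk.2.trans hQ'Q⟩

/-- The continuous (`q > μ`) part of Theorem 1 of the paper: the density at the
emission scale `q` produced by the Sudakov veto algorithm after exactly `n` rejection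
steps and a final acceptance step is `P(q) Δ_R(q|Q') Δ^{(n)}_{P-R}(q|Q')`. -/
theorem veto_algorithm_emission_density (μ Q : ℝ) (hμQ : μ ≤ Q) (P R : ℝ → ℝ)
    (hP : ContinuousOn P (Set.Icc μ Q)) (hR : ContinuousOn R (Set.Icc μ Q))
    (q : ℝ) (hq : μ < q)
    (S : ℕ → ℝ → ℝ)
    (hS0 : ∀ k, S 0 k = if q ≤ k then P q * Real.exp (-∫ t in q..k, R t) else 0)
    (hSsucc : ∀ n Q', S (n + 1) Q' =
      ∫ k in μ..Q', S n k * (R k - P k) * Real.exp (-∫ t in k..Q', R t)) :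
    ∀ n : ℕ, ∀ Q' ∈ Set.Icc q Q,
      S n Q' = P q * Real.exp (-∫ t in q..Q', R t) * (1 / (Nat.factorial n) : ℝ) *
        (∫ t in q..Q', (R t - P t)) ^ n :=
  veto_algorithm_emission_density_general μ Q P R hP hR q hq S hS0 hSsucc
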